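/- Let G be a unicyclic graph whose unique cycle C is a triangle with vertices v1, v2, v3, and let Ti be the tree containing vi in G − E(C). If all three trees T1, T2, T3 are nontrivial, then src(G) ≤ m − 3, where m is the number of edges of G. -/

import Mathlib

open SimpleGraph

/-- An edge-coloring `c` is a strong rainbow coloring of `G` if every pair of vertices is
joined by a geodesic (shortest path) whose edges receive pairwise distinct colors. -/
def SimpleGraph.IsStrongRainbowColoring {V : Type*} (G : SimpleGraph V) (c : Sym2 V → ℕ) : Prop :=
  ∀ u v : V, ∃ p : G.Walk u v, p.IsPath ∧ p.length = G.dist u v ∧ (p.edges.map c).Nodup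

/-- The strong rainbow connection number: the least number of colors in a strong rainbow
coloring of `G`. -/
noncomputable def SimpleGraph.src {V : Type*} (G : SimpleGraph V) : ℕ :=
  sInf {n : ℕ | ∃ c : Sym2 V → Fin n, ∀ u v : V, ∃ p : G.Walk u v,
    p.IsPath ∧ p.length = G.dist u v ∧ (p.edges.map c).Nodup}

/-!
Keep every edge outside the triangle `v₁v₂v₃` as its own color, and give the triangle edge
`vᵢvⱼ` the color of an edge `vₖuₖ` of the nontrivial tree `Tₖ` at the opposite vertex; this
uses `m - 3` colors. Every geodesic is rainbow: along a geodesic through `vₖ` consecutive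
vertices have different distances from `vₖ`, so it cannot use the edge `vᵢvⱼ` joining two
neighbours of `vₖ`.
Hence a geodesic using `vᵢvⱼ` avoids `vₖ`, so it contains neither `vₖuₖ` nor another
triangle edge.
-/

namespace SimpleGraph.Walk

variable {V : Type*} {G : SimpleGraph V} {u v : V}

lemma dist_getVert_getVert_of_length_eq_dist {p : G.Walk u v} (hp : p.length = G.dist u v)
    {i j : ℕ} (hij : i ≤ j) (hj : j ≤ p.length) :
    G.dist (p.getVert i) (p.getVert j) = j - i := by
  have h := length_eq_dist_of_subwalk hp (((p.drop i).isSubwalk_take (j - i)).trans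
    (p.isSubwalk_drop i))
  rw [take_length, drop_length, drop_getVert, Nat.add_sub_cancel' hij] at h
  omega

lemma dist_ne_of_mem_edges {p : G.Walk u v} (hp : p.length = G.dist u v) {w a b : V}
    (hw : w ∈ p.support) (hab : s(a, b) ∈ p.edges) : G.dist w a ≠ G.dist w b := by
  obtain ⟨j, rfl, hj⟩ := mem_support_iff_exists_getVert.mp hw
  obtain ⟨i, hi, hab⟩ := p.mk_mem_edges_iff_exists.mp hab
  suffices G.dist (p.getVert j) (p.getVert i) ≠ G.dist (p.getVert j) (p.getVert (i + 1)) by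
    rcases Sym2.eq_iff.mp hab with ⟨rfl, rfl⟩ | ⟨rfl, rfl⟩
    exacts [this, this.symm]
  rcases le_or_gt j i with hji | hij
  · rw [dist_getVert_getVert_of_length_eq_dist hp hji hi.le,
      dist_getVert_getVert_of_length_eq_dist hp (by omega) hi]
    omega
  · rw [dist_comm, dist_getVert_getVert_of_length_eq_dist hp hij.le hj, dist_comm,
      dist_getVert_getVert_of_length_eq_dist hp hij hj]
    omega

lemma notMem_support_of_mem_edges_of_adj {p : G.Walk u v} (hp : p.length = G.dist u v)
    {w a b : V} (hwa : G.Adj w a) (hwb : G.Adj w b) (hab : s(a, b) ∈ p.edges) :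
    w ∉ p.support := fun hw ↦
  dist_ne_of_mem_edges hp hw hab <| by
    rw [dist_eq_one_iff_adj.mpr hwa, dist_eq_one_iff_adj.mpr hwb]

end SimpleGraph.Walk

namespace SimpleGraph

variable {V : Type*} {G : SimpleGraph V}

lemma exists_adj_of_reachable_of_ne {u v : V} (huv : u ≠ v) (h : G.Reachable u v) :
    ∃ w, G.Adj u w :=
  h.elim fun p ↦ ⟨_, p.adj_snd (Walk.not_nil_of_ne huv)⟩

lemma src_le_card_of_mapsTo {β : Type*} {S : Finset β} (hS : S.Nonempty) (f : Sym2 V → β)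
    (hf : Set.MapsTo f G.edgeSet S)
    (h : ∀ u v : V, ∃ p : G.Walk u v, p.IsPath ∧ p.length = G.dist u v ∧ (p.edges.map f).Nodup) :
    G.src ≤ S.card := by
  classical
  let index (b : β) : Fin S.card := if hb : b ∈ S then S.equivFin ⟨b, hb⟩ else ⟨0, hS.card_pos⟩
  refine Nat.sInf_le ⟨index ∘ f, fun u v ↦ ?_⟩
  obtain ⟨p, hpath, hlen, hnodup⟩ := h u v
  refine ⟨p, hpath, hlen, ?_⟩
  rw [← List.map_map]
  refine hnodup.map_on fun b hb b' hb' hbb' ↦ ?_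
  obtain ⟨e, he, rfl⟩ := List.mem_map.mp hb
  obtain ⟨e', he', rfl⟩ := List.mem_map.mp hb'
  have hfe : f e ∈ S := hf (p.edges_subset_edgeSet he)
  have hfe' : f e' ∈ S := hf (p.edges_subset_edgeSet he')
  simpa [index, hfe, hfe'] using hbb'

variable [DecidableEq V]

def triangleEdges (v₁ v₂ v₃ : V) : Finset (Sym2 V) := {s(v₁, v₂), s(v₂, v₃), s(v₁, v₃)}

def triangleRecolor (v₁ v₂ v₃ u₁ u₂ u₃ : V) (e : Sym2 V) : Sym2 V :=
  if e = s(v₁, v₂) then s(v₃, u₃)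
  else if e = s(v₂, v₃) then s(v₁, u₁)
  else if e = s(v₁, v₃) then s(v₂, u₂)
  else e

variable {v₁ v₂ v₃ u₁ u₂ u₃ : V}

lemma triangleRecolor_of_notMem {e : Sym2 V} (he : e ∉ triangleEdges v₁ v₂ v₃) :
    triangleRecolor v₁ v₂ v₃ u₁ u₂ u₃ e = e := by
  simp_all [triangleEdges, triangleRecolor]

lemma mapsTo_triangleRecolor (h₁₂ : v₁ ≠ v₂) (h₂₃ : v₂ ≠ v₃) (h₁₃ : v₁ ≠ v₃)
    (h₁ : (G.deleteEdges (triangleEdges v₁ v₂ v₃)).Adj v₁ u₁)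
    (h₂ : (G.deleteEdges (triangleEdges v₁ v₂ v₃)).Adj v₂ u₂)
    (h₃ : (G.deleteEdges (triangleEdges v₁ v₂ v₃)).Adj v₃ u₃) :
    Set.MapsTo (triangleRecolor v₁ v₂ v₃ u₁ u₂ u₃) G.edgeSet
      (G.edgeSet \ triangleEdges v₁ v₂ v₃) := by
  intro e he
  by_cases heT : e ∈ triangleEdges v₁ v₂ v₃
  · simp only [triangleEdges, Finset.mem_insert, Finset.mem_singleton] at heT
    rcases heT with rfl | rfl | rfl <;>
      simp_all [triangleRecolor, h₁₂.symm, h₂₃.symm, h₁₃.symm]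
  · rw [triangleRecolor_of_notMem heT]
    exact ⟨he, heT⟩

variable (h₁₂ : G.Adj v₁ v₂) (h₂₃ : G.Adj v₂ v₃) (h₁₃ : G.Adj v₁ v₃)
include h₁₂ h₂₃ h₁₃

lemma exists_notMem_support_mem_triangleRecolor {u v : V} {p : G.Walk u v}
    (hp : p.length = G.dist u v) {e : Sym2 V} (heT : e ∈ triangleEdges v₁ v₂ v₃)
    (hep : e ∈ p.edges) :
    ∃ w ∉ p.support, w ∈ triangleRecolor v₁ v₂ v₃ u₁ u₂ u₃ e ∧
      ∀ f ∈ triangleEdges v₁ v₂ v₃, f ≠ e → w ∈ f := by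
  simp only [triangleEdges, Finset.mem_insert, Finset.mem_singleton] at heT
  rcases heT with rfl | rfl | rfl
  · refine ⟨v₃, p.notMem_support_of_mem_edges_of_adj hp h₁₃.symm h₂₃.symm hep, ?_⟩
    simp [triangleRecolor, triangleEdges]
  · refine ⟨v₁, p.notMem_support_of_mem_edges_of_adj hp h₁₂ h₁₃ hep, ?_⟩
    simp [triangleRecolor, triangleEdges, h₁₂.ne.symm, h₁₃.ne.symm]
  · refine ⟨v₂, p.notMem_support_of_mem_edges_of_adj hp h₁₂.symm h₂₃ hep, ?_⟩
    simp [triangleRecolor, triangleEdges, h₁₂.ne, h₂₃.ne.symm, h₁₃.ne]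

lemma nodup_map_triangleRecolor {u v : V} {p : G.Walk u v} (hp : p.length = G.dist u v) :
    (p.edges.map (triangleRecolor v₁ v₂ v₃ u₁ u₂ u₃)).Nodup := by
  have eq_of_mem_triangleEdges : ∀ e ∈ p.edges, ∀ f ∈ p.edges, e ∈ triangleEdges v₁ v₂ v₃ →
      triangleRecolor v₁ v₂ v₃ u₁ u₂ u₃ e = triangleRecolor v₁ v₂ v₃ u₁ u₂ u₃ f → e = f := by
    intro e he f hf heT hef
    obtain ⟨w, hw, hwe, hwT⟩ := exists_notMem_support_mem_triangleRecolor (u₁ := u₁) (u₂ := u₂)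
      (u₃ := u₃) h₁₂ h₂₃ h₁₃ hp heT he
    have hwf : w ∉ f := fun h ↦ hw (Walk.mem_support_iff_exists_mem_edges.mpr (.inr ⟨f, hf, h⟩))
    by_contra hne
    by_cases hfT : f ∈ triangleEdges v₁ v₂ v₃
    · exact hwf (hwT f hfT (Ne.symm hne))
    · rw [hef, triangleRecolor_of_notMem hfT] at hwe
      exact hwf hwe
  refine (p.isPath_of_length_eq_dist hp).edges_nodup.map_on fun e he f hf hef ↦ ?_
  by_cases heT : e ∈ triangleEdges v₁ v₂ v₃
  · exact eq_of_mem_triangleEdges e he f hf heT hef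
  by_cases hfT : f ∈ triangleEdges v₁ v₂ v₃
  · exact (eq_of_mem_triangleEdges f hf e he hfT hef.symm).symm
  · rwa [triangleRecolor_of_notMem heT, triangleRecolor_of_notMem hfT] at hef

lemma triangleEdges_subset_edgeFinset [Fintype G.edgeSet] :
    triangleEdges v₁ v₂ v₃ ⊆ G.edgeFinset := by
  simp [triangleEdges, Finset.insert_subset_iff, h₁₂, h₂₃, h₁₃]

lemma card_triangleEdges : (triangleEdges v₁ v₂ v₃).card = 3 := by
  simp [triangleEdges, h₁₂.ne, h₂₃.ne, h₁₃.ne, h₁₂.ne.symm, h₁₃.ne.symm]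

end SimpleGraph

theorem stmt_12_general {V : Type*} [Fintype V] [DecidableEq V] (G : SimpleGraph V)
    [DecidableRel G.Adj] (hG : G.Connected) (v1 v2 v3 : V)
    (h12 : G.Adj v1 v2) (h23 : G.Adj v2 v3) (h13 : G.Adj v1 v3)
    (h1 : ∃ w, w ≠ v1 ∧ (G.deleteEdges {s(v1, v2), s(v2, v3), s(v1, v3)}).Reachable v1 w)
    (h2 : ∃ w, w ≠ v2 ∧ (G.deleteEdges {s(v1, v2), s(v2, v3), s(v1, v3)}).Reachable v2 w)
    (h3 : ∃ w, w ≠ v3 ∧ (G.deleteEdges {s(v1, v2), s(v2, v3), s(v1, v3)}).Reachable v3 w) :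
    G.src + 3 ≤ G.edgeFinset.card := by
  have htriangle : ((triangleEdges v1 v2 v3 : Finset (Sym2 V)) : Set (Sym2 V)) =
      {s(v1, v2), s(v2, v3), s(v1, v3)} := by
    simp [triangleEdges]
  rw [← htriangle] at h1 h2 h3
  obtain ⟨u1, hu1⟩ := h1.elim fun w ⟨hw, hr⟩ ↦ exists_adj_of_reachable_of_ne hw.symm hr
  obtain ⟨u2, hu2⟩ := h2.elim fun w ⟨hw, hr⟩ ↦ exists_adj_of_reachable_of_ne hw.symm hr
  obtain ⟨u3, hu3⟩ := h3.elim fun w ⟨hw, hr⟩ ↦ exists_adj_of_reachable_of_ne hw.symm hr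
  have hmaps : Set.MapsTo (triangleRecolor v1 v2 v3 u1 u2 u3) G.edgeSet
      ↑(G.edgeFinset \ triangleEdges v1 v2 v3) := by
    rw [Finset.coe_sdiff, coe_edgeFinset]
    exact mapsTo_triangleRecolor h12.ne h23.ne h13.ne hu1 hu2 hu3
  have hsrc : G.src ≤ (G.edgeFinset \ triangleEdges v1 v2 v3).card :=
    src_le_card_of_mapsTo ⟨_, hmaps ((mem_edgeSet G).mpr h12)⟩ _ hmaps
      fun u v ↦ (hG.exists_path_of_dist u v).imp fun p ⟨hpath, hlen⟩ ↦
        ⟨hpath, hlen, nodup_map_triangleRecolor h12 h23 h13 hlen⟩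
  have hcard := Finset.card_sdiff_add_card_eq_card
    (triangleEdges_subset_edgeFinset (G := G) h12 h23 h13)
  rw [card_triangleEdges h12 h23 h13] at hcard
  omega

/-- Unicyclic graph whose cycle is a triangle `v1 v2 v3`: if all three pendant trees
`T1, T2, T3` are nontrivial, then `src G ≤ m - 3`. -/
theorem stmt_12 {V : Type*} [Fintype V] [DecidableEq V] (G : SimpleGraph V)
    [DecidableRel G.Adj] (hG : G.Connected) (v1 v2 v3 : V)
    (h12 : G.Adj v1 v2) (h23 : G.Adj v2 v3) (h13 : G.Adj v1 v3)
    (huni : G.edgeFinset.card = Fintype.card V)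
    (h1 : ∃ w, w ≠ v1 ∧ (G.deleteEdges {s(v1, v2), s(v2, v3), s(v1, v3)}).Reachable v1 w)
    (h2 : ∃ w, w ≠ v2 ∧ (G.deleteEdges {s(v1, v2), s(v2, v3), s(v1, v3)}).Reachable v2 w)
    (h3 : ∃ w, w ≠ v3 ∧ (G.deleteEdges {s(v1, v2), s(v2, v3), s(v1, v3)}).Reachable v3 w) :
    G.src + 3 ≤ G.edgeFinset.card :=
  stmt_12_general G hG v1 v2 v3 h12 h23 h13 h1 h2 h3
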